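/- arXiv:2303.10933 — 2 statements merged into one kernel-verified Lean document; each statement's English description precedes it below -/
import Mathlib

section
/- Let d ≥ 1, let 𝒞 be a symmetric positive-definite linear map on ℝ^{d×d}, and write |A|²_𝒞 := (1/2)⟨𝒞A, A⟩. Let W : ℝ^{d×d} → ℝ satisfy: (a) W(A) ≥ c₄ dist²(A, SO(d)) for all A ∈ ℝ^{d×d}, for some constant c₄ > 0; and (b) for every δ > 0 there exists c(δ) > 0 such that |W(I + A) − |A|²_𝒞| ≤ δ|A|²_𝒞 whenever |A| ≤ c(δ). Then c₄|A^{sym}|² ≤ |A|²_𝒞 for every A ∈ ℝ^{d×d}, where A^{sym} := (A + Aᵀ)/2. -/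
open Matrix Metric

attribute [local instance] Matrix.frobeniusNormedAddCommGroup
attribute [local instance] Matrix.frobeniusNormedSpace

/-- The Frobenius inner product on `d × d` real matrices. -/
def dotM {d : ℕ} (A B : Matrix (Fin d) (Fin d) ℝ) : ℝ :=
  ∑ i, ∑ j, A i j * B i j

/-- The set `SO(d)` of rotation matrices. -/
def SOd (d : ℕ) : Set (Matrix (Fin d) (Fin d) ℝ) :=
  {Q | Qᵀ * Q = 1 ∧ Q.det = 1}

lemma dotM_smul_smul {d : ℕ} (t : ℝ) (X Y : Matrix (Fin d) (Fin d) ℝ) :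
    dotM (t • X) (t • Y) = t ^ 2 * dotM X Y := by
  simp only [dotM, Matrix.smul_apply, smul_eq_mul, Finset.mul_sum]
  refine Finset.sum_congr rfl fun i _ => Finset.sum_congr rfl fun j _ => by ring

lemma dotM_nonneg {d : ℕ} (C : Matrix (Fin d) (Fin d) ℝ →ₗ[ℝ] Matrix (Fin d) (Fin d) ℝ)
    (hCpos : ∀ A : Matrix (Fin d) (Fin d) ℝ, A ≠ 0 → 0 < dotM (C A) A)
    (A : Matrix (Fin d) (Fin d) ℝ) : 0 ≤ dotM (C A) A := by
  rcases eq_or_ne A 0 with rfl | h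
  · simp [dotM]
  · exact (hCpos A h).le

lemma sym_norm_le {d : ℕ} (X : Matrix (Fin d) (Fin d) ℝ) :
    ‖(1 / 2 : ℝ) • (X + Xᵀ)‖ ≤ ‖X‖ := by
  calc ‖(1 / 2 : ℝ) • (X + Xᵀ)‖ = (1/2) * ‖X + Xᵀ‖ := by
        rw [norm_smul]; norm_num
    _ ≤ (1/2) * (‖X‖ + ‖Xᵀ‖) := by
        gcongr; exact norm_add_le _ _
    _ = ‖X‖ := by rw [Matrix.frobenius_norm_transpose]; ring

lemma symQ_norm {d : ℕ} (Q : Matrix (Fin d) (Fin d) ℝ) (hQ : Qᵀ * Q = 1) :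
    ‖(1 / 2 : ℝ) • (Q + Qᵀ) - 1‖ ≤ (1/2) * ‖Q - 1‖ ^ 2 := by
  have key : (1 / 2 : ℝ) • (Q + Qᵀ) - 1 = -((1/2 : ℝ) • ((Q - 1)ᵀ * (Q - 1))) := by
    have : (Q - 1)ᵀ * (Q - 1) = (2 : ℝ) • 1 - Q - Qᵀ := by
      simp only [Matrix.transpose_sub, Matrix.transpose_one, Matrix.sub_mul, Matrix.mul_sub,
        Matrix.one_mul, Matrix.mul_one, hQ]
      ext i j
      simp [Matrix.sub_apply, Matrix.smul_apply]
      ring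
    rw [this]
    ext i j
    simp [Matrix.sub_apply, Matrix.smul_apply, Matrix.add_apply, Matrix.neg_apply]
    ring
  rw [key, norm_neg, norm_smul]
  have := Matrix.frobenius_norm_mul (Q - 1)ᵀ (Q - 1)
  rw [Matrix.frobenius_norm_transpose] at this
  calc ‖(1/2 : ℝ)‖ * ‖(Q - 1)ᵀ * (Q - 1)‖ ≤ (1/2) * (‖Q - 1‖ * ‖Q - 1‖) := by
        rw [show ‖(1/2 : ℝ)‖ = 1/2 by norm_num]; gcongr
    _ = (1/2) * ‖Q - 1‖ ^ 2 := by ring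

lemma sym_decomp {d : ℕ} (t : ℝ) (A Q : Matrix (Fin d) (Fin d) ℝ) :
    (1/2 : ℝ) • (((1 + t • A) - Q) + ((1 + t • A) - Q)ᵀ)
      = t • ((1/2 : ℝ) • (A + Aᵀ)) - ((1/2 : ℝ) • (Q + Qᵀ) - 1) := by
  have : ((1 + t • A) - Q)ᵀ = 1 + t • Aᵀ - Qᵀ := by
    simp [Matrix.transpose_sub, Matrix.transpose_add, Matrix.transpose_smul,
      Matrix.transpose_one]
  rw [this]
  module

set_option maxHeartbeats 2000000 in
/-- If `W` controls the squared distance to `SO(d)` from above by `c₄` and admits the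
quadratic expansion `|A|²_𝒞 = (1/2)⟨𝒞A, A⟩` at the identity, then
`c₄|A^sym|² ≤ |A|²_𝒞` for every matrix `A`. -/
theorem linearized_coercivity {d : ℕ} (hd : 1 ≤ d)
    (C : Matrix (Fin d) (Fin d) ℝ →ₗ[ℝ] Matrix (Fin d) (Fin d) ℝ)
    (hCsymm : ∀ A B : Matrix (Fin d) (Fin d) ℝ, dotM (C A) B = dotM A (C B))
    (hCpos : ∀ A : Matrix (Fin d) (Fin d) ℝ, A ≠ 0 → 0 < dotM (C A) A)
    (W : Matrix (Fin d) (Fin d) ℝ → ℝ) (c₄ : ℝ) (hc₄ : 0 < c₄)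
    (hgrowth : ∀ A : Matrix (Fin d) (Fin d) ℝ, c₄ * infDist A (SOd d) ^ 2 ≤ W A)
    (hexp : ∀ δ > (0 : ℝ), ∃ c > (0 : ℝ), ∀ A : Matrix (Fin d) (Fin d) ℝ, ‖A‖ ≤ c →
      |W (1 + A) - (1 / 2) * dotM (C A) A| ≤ δ * ((1 / 2) * dotM (C A) A)) :
    ∀ A : Matrix (Fin d) (Fin d) ℝ,
      c₄ * ‖(1 / 2 : ℝ) • (A + Aᵀ)‖ ^ 2 ≤ (1 / 2) * dotM (C A) A := by
  intro A
  have hq0 : 0 ≤ (1/2) * dotM (C A) A := by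
    have := dotM_nonneg C hCpos A; linarith
  set s : ℝ := ‖(1 / 2 : ℝ) • (A + Aᵀ)‖ with hs
  set M : ℝ := ‖A‖ with hM
  have hsnn : 0 ≤ s := hs ▸ norm_nonneg _
  have hsM : s ≤ M := sym_norm_le A
  clear_value s M
  rcases eq_or_lt_of_le hsnn with hs0 | hs0
  · rw [← hs0]; simpa using hq0
  have hM0 : 0 < M := lt_of_lt_of_le hs0 hsM
  have hA0 : A ≠ 0 := by
    intro h
    rw [h, norm_zero] at hM
    rw [hM] at hM0
    exact lt_irrefl _ hM0
  have hq : 0 < (1/2) * dotM (C A) A := by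
    have := hCpos A hA0; linarith
  set q : ℝ := (1/2) * dotM (C A) A with hqd
  clear_value q
  have hM2 : 0 < M ^ 2 := pow_pos hM0 2
  apply le_of_forall_pos_le_add
  intro ε hε
  obtain ⟨c, hc, hWexp⟩ := hexp (ε / (2 * q)) (div_pos hε (by linarith))
  have hden : 0 < 8 * c₄ * s * M ^ 2 := by
    have h1 : 0 < 8 * c₄ := by linarith
    have h2 : 0 < 8 * c₄ * s := mul_pos h1 hs0
    exact mul_pos h2 hM2
  set t : ℝ := min (c / M) (min (s / (2 * M^2)) (ε / (8 * c₄ * s * M^2))) with htd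
  have ht : 0 < t :=
    lt_min (div_pos hc hM0) (lt_min (div_pos hs0 (by linarith)) (div_pos hε hden))
  have htM : t * M ≤ c := by
    have h1 : t ≤ c / M := min_le_left _ _
    have h2 : t * M ≤ (c / M) * M := mul_le_mul_of_nonneg_right h1 hM0.le
    rwa [div_mul_cancel₀ _ hM0.ne'] at h2
  have hu : 2 * t * M^2 ≤ s := by
    have h1 : t ≤ s / (2 * M^2) := le_trans (min_le_right _ _) (min_le_left _ _)
    have h2 : t * (2 * M^2) ≤ (s / (2 * M^2)) * (2 * M^2) :=
      mul_le_mul_of_nonneg_right h1 (by linarith)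
    rw [div_mul_cancel₀ _ (by linarith : (2 : ℝ) * M^2 ≠ 0)] at h2
    linarith
  have hεt : 4 * c₄ * s * t * M^2 ≤ ε / 2 := by
    have h1 : t ≤ ε / (8 * c₄ * s * M^2) := le_trans (min_le_right _ _) (min_le_right _ _)
    have h2 : t * (8 * c₄ * s * M^2) ≤ (ε / (8 * c₄ * s * M^2)) * (8 * c₄ * s * M^2) :=
      mul_le_mul_of_nonneg_right h1 hden.le
    rw [div_mul_cancel₀ _ hden.ne'] at h2
    linarith
  clear_value t
  clear htd
  have hone : (1 : Matrix (Fin d) (Fin d) ℝ) ∈ SOd d := by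
    constructor
    · simp [Matrix.transpose_one]
    · simp
  have hne : (SOd d).Nonempty := ⟨1, hone⟩
  have hnormtA : ‖t • A‖ = t * M := by
    rw [norm_smul, Real.norm_eq_abs, abs_of_pos ht, hM]
  have hts : (0 : ℝ) ≤ 2 * t^2 * M^2 := by
    have := sq_nonneg t
    nlinarith
  -- lower bound on the distance
  have hL : t * s - 2 * t^2 * M^2 ≤ infDist (1 + t • A) (SOd d) := by
    by_contra h
    push_neg at h
    obtain ⟨Q, hQmem, hQdist⟩ := (infDist_lt_iff hne).mp h
    have hrn : dist (1 + t • A) Q = ‖(1 + t • A) - Q‖ := dist_eq_norm _ _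
    have hrM : ‖(1 + t • A) - Q‖ ≤ t * M := by
      have h2 : t * s ≤ t * M := mul_le_mul_of_nonneg_left hsM ht.le
      rw [← hrn]; linarith
    have hQ1 : ‖Q - 1‖ ≤ 2 * (t * M) := by
      have he : Q - 1 = -((1 + t • A) - Q) + t • A := by abel
      rw [he]
      calc ‖-((1 + t • A) - Q) + t • A‖ ≤ ‖-((1 + t • A) - Q)‖ + ‖t • A‖ := norm_add_le _ _
        _ = ‖(1 + t • A) - Q‖ + t * M := by rw [norm_neg, hnormtA]
        _ ≤ 2 * (t * M) := by linarith
    have hsymQ : ‖(1/2 : ℝ) • (Q + Qᵀ) - 1‖ ≤ 2 * t^2 * M^2 := by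
      have h1 := symQ_norm Q hQmem.1
      have h2 : ‖Q - 1‖^2 ≤ (2 * (t * M))^2 :=
        pow_le_pow_left₀ (norm_nonneg _) hQ1 2
      nlinarith [norm_nonneg (Q - (1 : Matrix (Fin d) (Fin d) ℝ))]
    have hlow : t * s - 2 * t^2 * M^2 ≤ ‖(1 + t • A) - Q‖ := by
      have hproj : ‖(1/2 : ℝ) • (((1 + t • A) - Q) + ((1 + t • A) - Q)ᵀ)‖
          ≤ ‖(1 + t • A) - Q‖ := sym_norm_le _
      rw [sym_decomp t A Q] at hproj
      have h3 : ‖t • ((1/2 : ℝ) • (A + Aᵀ))‖ - ‖(1/2 : ℝ) • (Q + Qᵀ) - 1‖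
          ≤ ‖t • ((1/2 : ℝ) • (A + Aᵀ)) - ((1/2 : ℝ) • (Q + Qᵀ) - 1)‖ :=
        norm_sub_norm_le _ _
      have h4 : ‖t • ((1/2 : ℝ) • (A + Aᵀ))‖ = t * s := by
        rw [norm_smul, Real.norm_eq_abs, abs_of_pos ht, hs]
      rw [h4] at h3
      linarith
    rw [← hrn] at hlow
    linarith
  have hLpos : 0 ≤ t * s - 2 * t^2 * M^2 := by nlinarith
  have hDnn : 0 ≤ infDist (1 + t • A) (SOd d) := infDist_nonneg
  have hsq : c₄ * (t * s - 2 * t^2 * M^2)^2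
      ≤ c₄ * infDist (1 + t • A) (SOd d) ^ 2 := by
    have h5 : (t * s - 2 * t^2 * M^2)^2 ≤ infDist (1 + t • A) (SOd d) ^ 2 :=
      pow_le_pow_left₀ hLpos hL 2
    nlinarith
  have hWlow := hgrowth (1 + t • A)
  have hWup : W (1 + t • A) ≤ t^2 * q + (ε / (2 * q)) * (t^2 * q) := by
    have hle : ‖t • A‖ ≤ c := by rw [hnormtA]; exact htM
    have h6 := hWexp (t • A) hle
    have hswap : (1/2) * dotM (C (t • A)) (t • A) = t^2 * q := by
      rw [_root_.map_smul, dotM_smul_smul, hqd]; ring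
    rw [hswap] at h6
    have := (abs_le.mp h6).2
    linarith
  have hmain : c₄ * (s - 2 * t * M^2)^2 ≤ q + (ε / (2 * q)) * q := by
    have hchain : c₄ * (t^2 * (s - 2 * t * M^2)^2) ≤ t^2 * (q + (ε / (2 * q)) * q) := by
      calc c₄ * (t^2 * (s - 2 * t * M^2)^2)
          = c₄ * (t * s - 2 * t^2 * M^2)^2 := by ring
        _ ≤ c₄ * infDist (1 + t • A) (SOd d) ^ 2 := hsq
        _ ≤ W (1 + t • A) := hWlow
        _ ≤ t^2 * q + (ε / (2 * q)) * (t^2 * q) := hWup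
        _ = t^2 * (q + (ε / (2 * q)) * q) := by ring
    have ht2 : 0 < t^2 := pow_pos ht 2
    nlinarith
  have hδq : (ε / (2 * q)) * q = ε / 2 := by
    field_simp
  rw [hδq] at hmain
  nlinarith [hmain, hεt, sq_nonneg (2 * t * M^2)]
end

section
/- Let (Ω, μ) be a finite measure space, let 0 < ε ≤ 1, and let V : Ω → ℝ^{3×3} be measurable with det(I + εV(x)) = 1 for μ-a.e. x, ∫_Ω |V|² dμ ≤ C₁, and |εV(x)| ≤ C₂ for μ-a.e. x. Then there exists a constant C depending only on C₁ and C₂ (and not on ε, V, Ω) such that ∫_Ω |tr V| dμ ≤ C ε. -/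
open Matrix MeasureTheory

attribute [local instance] Matrix.frobeniusNormedAddCommGroup

/-!
With `A = εV`, the cubic expansion `det (1 + A) = 1 + tr A + tr (adj A) + det A` and
`det (1 + A) = 1` give `tr A = -(tr (adj A) + det A)`, which is quadratic in `|A|` while `|A|`
stays bounded: `|tr A| ≤ 6 (1 + |A|) |A|²`. Dividing by `ε` yields
`|tr V| ≤ 6 (1 + C₂) ε |V|²` pointwise, and integrating gives the claim with
`C = 6 (1 + |C₂|) C₁`.
-/

namespace Matrix

open scoped Nat

variable {n : Type*} [Fintype n]

attribute [local instance] frobeniusNormSMulClass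

theorem abs_apply_le_frobenius_norm {m : Type*} [Fintype m] (A : Matrix m n ℝ) (i : m) (j : n) :
    |A i j| ≤ ‖A‖ :=
  calc |A i j| = ‖WithLp.toLp 2 (A i) j‖ := rfl
    _ ≤ ‖WithLp.toLp 2 (A i)‖ := PiLp.norm_apply_le _ j
    _ ≤ ‖A‖ := PiLp.norm_apply_le (WithLp.toLp 2 fun i => WithLp.toLp 2 (A i)) i

theorem abs_det_le_frobenius_norm_pow [DecidableEq n] (A : Matrix n n ℝ) :
    |A.det| ≤ (Fintype.card n)! * ‖A‖ ^ Fintype.card n := by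
  simpa using det_le (abv := AbsoluteValue.abs) (abs_apply_le_frobenius_norm A)

theorem abs_trace_adjugate_le_frobenius_norm_pow {k : ℕ}
    (A : Matrix (Fin (k + 1)) (Fin (k + 1)) ℝ) :
    |A.adjugate.trace| ≤ (k + 1)! * ‖A‖ ^ k := by
  have hdiag (i : Fin (k + 1)) : |A.adjugate i i| ≤ k ! * ‖A‖ ^ k := by
    rw [adjugate_fin_succ_eq_det_submatrix, ← two_mul, pow_mul, neg_one_sq, one_pow, one_mul]
    simpa using det_le (A := A.submatrix i.succAbove i.succAbove) (abv := AbsoluteValue.abs)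
      fun _ _ => abs_apply_le_frobenius_norm A _ _
  calc |A.adjugate.trace| ≤ ∑ i, |A.adjugate i i| := Finset.abs_sum_le_sum_abs _ _
    _ ≤ ∑ _i : Fin (k + 1), k ! * ‖A‖ ^ k := Finset.sum_le_sum fun i _ => hdiag i
    _ = (k + 1)! * ‖A‖ ^ k := by
      rw [Finset.sum_const, Finset.card_univ, Fintype.card_fin, nsmul_eq_mul, Nat.factorial_succ]
      push_cast
      ring

theorem det_one_add_fin_three {R : Type*} [CommRing R] (A : Matrix (Fin 3) (Fin 3) R) :
    (1 + A).det = 1 + A.trace + A.adjugate.trace + A.det := by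
  rw [adjugate_fin_three, trace_fin_three_of, trace_fin_three]
  simp only [det_fin_three, add_apply, one_apply_eq, ne_eq, Fin.reduceEq, not_false_eq_true,
    one_apply_ne]
  ring

theorem abs_trace_le_of_det_one_add_eq_one {A : Matrix (Fin 3) (Fin 3) ℝ} (h : (1 + A).det = 1) :
    |A.trace| ≤ 6 * (1 + ‖A‖) * ‖A‖ ^ 2 := by
  have htrace : A.trace = -(A.adjugate.trace + A.det) := by
    linear_combination (det_one_add_fin_three A).symm.trans h
  calc |A.trace| ≤ |A.adjugate.trace| + |A.det| := by rw [htrace, abs_neg]; exact abs_add_le _ _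
    _ ≤ 6 * ‖A‖ ^ 2 + 6 * ‖A‖ ^ 3 := by
      gcongr
      · simpa [Nat.factorial] using abs_trace_adjugate_le_frobenius_norm_pow A
      · simpa [Nat.factorial] using abs_det_le_frobenius_norm_pow A
    _ = 6 * (1 + ‖A‖) * ‖A‖ ^ 2 := by ring

theorem abs_trace_le_of_det_one_add_smul_eq_one {ε : ℝ} (hε : 0 < ε)
    {V : Matrix (Fin 3) (Fin 3) ℝ} (h : (1 + ε • V).det = 1) :
    |V.trace| ≤ 6 * (1 + ‖ε • V‖) * ‖V‖ ^ 2 * ε := by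
  have hεV : ‖ε • V‖ = ε * ‖V‖ := by rw [norm_smul, Real.norm_eq_abs, abs_of_pos hε]
  refine le_of_mul_le_mul_left ?_ hε
  calc ε * |V.trace| = |(ε • V).trace| := by
        rw [trace_smul, smul_eq_mul, abs_mul, abs_of_pos hε]
    _ ≤ 6 * (1 + ‖ε • V‖) * ‖ε • V‖ ^ 2 := abs_trace_le_of_det_one_add_eq_one h
    _ = ε * (6 * (1 + ‖ε • V‖) * ‖V‖ ^ 2 * ε) := by rw [hεV]; ring

end Matrix

/-- Incompressibility forces a small trace: there is a constant `C = C(C₁, C₂)` such that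
whenever `0 < ε ≤ 1` and `V : Ω → ℝ^{3×3}` satisfies `det(I + εV) = 1` a.e.,
`∫|V|² ≤ C₁` and `|εV| ≤ C₂` a.e. on a finite measure space, then `∫|tr V| ≤ C ε`. -/
theorem trace_small_of_incompressible (C₁ C₂ : ℝ) :
    ∃ C : ℝ, ∀ (Ω : Type*) [MeasurableSpace Ω] (μ : Measure Ω), IsFiniteMeasure μ →
      ∀ (ε : ℝ), 0 < ε → ε ≤ 1 →
      ∀ V : Ω → Matrix (Fin 3) (Fin 3) ℝ, MemLp V 2 μ →
        (∀ᵐ x ∂μ, (1 + ε • V x).det = 1) →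
        (∫ x, ‖V x‖ ^ 2 ∂μ) ≤ C₁ →
        (∀ᵐ x ∂μ, ‖ε • V x‖ ≤ C₂) →
        (∫ x, |(V x).trace| ∂μ) ≤ C * ε := by
  refine ⟨6 * (1 + |C₂|) * C₁, fun Ω _ μ _ ε hε _ V hV hdet hL2 hLinfty => ?_⟩
  have hpointwise : ∀ᵐ x ∂μ, |(V x).trace| ≤ 6 * (1 + |C₂|) * ε * ‖V x‖ ^ 2 := by
    filter_upwards [hdet, hLinfty] with x hdet_x hLinfty_x
    calc |(V x).trace| ≤ 6 * (1 + ‖ε • V x‖) * ‖V x‖ ^ 2 * ε :=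
          abs_trace_le_of_det_one_add_smul_eq_one hε hdet_x
      _ ≤ 6 * (1 + |C₂|) * ‖V x‖ ^ 2 * ε := by
        gcongr; exact hLinfty_x.trans (le_abs_self C₂)
      _ = 6 * (1 + |C₂|) * ε * ‖V x‖ ^ 2 := by ring
  calc ∫ x, |(V x).trace| ∂μ ≤ ∫ x, 6 * (1 + |C₂|) * ε * ‖V x‖ ^ 2 ∂μ :=
        integral_mono_of_nonneg (.of_forall fun x => abs_nonneg _)
          ((hV.integrable_norm_pow two_ne_zero).const_mul _) hpointwise
    _ = 6 * (1 + |C₂|) * ε * ∫ x, ‖V x‖ ^ 2 ∂μ := integral_const_mul _ _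
    _ ≤ 6 * (1 + |C₂|) * ε * C₁ := by gcongr
    _ = 6 * (1 + |C₂|) * C₁ * ε := by ring
end
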